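/- Let (X, f_{1,∞}) and (Y, g_{1,∞}) be nonautonomous discrete dynamical systems that are topologically semi-conjugate via a continuous surjection h : X → Y (i.e. g_n ∘ h = h ∘ f_n for every n). Then g_1^p ∘ h = h ∘ f_1^p for every ultrafilter p on ℕ, and the map H : E(X, f_{1,∞}) → E(Y, g_{1,∞}) defined by H(f_1^p) = g_1^p is well-defined, continuous, and surjective; in particular E(Y, g_{1,∞}) is a continuous image of E(X, f_{1,∞}). If moreover h is a homeomorphism, then H is a homeomorphism. -/
import Mathlib


open Filter Topology

/-- The `n`-th iterate `f_1^n = f_n ∘ ⋯ ∘ f_1` (maps indexed from `1`; `f 0` unused). -/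
def iterSeq {X : Type*} (f : ℕ → X → X) : ℕ → X → X
  | 0 => id
  | n + 1 => f (n + 1) ∘ iterSeq f n

/-- The `p`-limit of a sequence `u` with respect to an ultrafilter `p` on `ℕ`. -/
noncomputable def pLim {X : Type*} [TopologicalSpace X] (p : Ultrafilter ℕ) (u : ℕ → X) : X :=
  letI : Nonempty X := ⟨u 0⟩
  limUnder (p : Filter ℕ) u

/-- `f_1^p(x) = p-lim_n f_1^n(x)`. -/
noncomputable def pIter {X : Type*} [TopologicalSpace X] (f : ℕ → X → X)
    (p : Ultrafilter ℕ) : X → X :=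
  fun x => pLim p fun n => iterSeq f n x

lemma tendsto_pLim {X : Type*} [TopologicalSpace X] [CompactSpace X] [T2Space X]
    (p : Ultrafilter ℕ) (u : ℕ → X) : Tendsto u ↑p (𝓝 (pLim p u)) := by
  letI : Nonempty X := ⟨u 0⟩
  have h1 : (↑(p.map u) : Filter X) ≤ 𝓝 (p.map u).lim := Ultrafilter.le_nhds_lim _
  exact h1

lemma pLim_comm {X Y : Type*} [TopologicalSpace X] [CompactSpace X] [T2Space X]
    [TopologicalSpace Y] [CompactSpace Y] [T2Space Y]
    (p : Ultrafilter ℕ) (u : ℕ → X) {h : X → Y} (hcont : Continuous h) :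
    pLim p (fun n => h (u n)) = h (pLim p u) := by
  refine tendsto_nhds_unique (tendsto_pLim p _) ?_
  exact ((hcont.tendsto _).comp (tendsto_pLim p u))

/-- Let `(X, f_{1,∞})` and `(Y, g_{1,∞})` be topologically semi-conjugate via a continuous
surjection `h : X → Y` (`g_n ∘ h = h ∘ f_n` for all `n ≥ 1`).  Then `g_1^p ∘ h = h ∘ f_1^p`
for every ultate filter `p` on `ℕ`, and the map `H : E(X, f_{1,∞}) → E(Y, g_{1,∞})`,
`H(f_1^p) = g_1^p`, is well-defined, continuous and surjective; in particular
`E(Y, g_{1,∞})` is a continuous image of `E(X, f_{1,∞})`.  If moreover `h` is a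
homeomorphism, then `H` is a homeomorphism. -/
theorem stmt19 {X Y : Type*} [MetricSpace X] [CompactSpace X]
    [MetricSpace Y] [CompactSpace Y]
    (f : ℕ → X → X) (hf : ∀ n, 1 ≤ n → Continuous (f n))
    (g : ℕ → Y → Y) (hg : ∀ n, 1 ≤ n → Continuous (g n))
    (h : X → Y) (hcont : Continuous h) (hsurj : Function.Surjective h)
    (hconj : ∀ n, 1 ≤ n → g n ∘ h = h ∘ f n) :
    (∀ p : Ultrafilter ℕ, pIter g p ∘ h = h ∘ pIter f p) ∧
    ∃ H : closure {e : X → X | ∃ n : ℕ, e = iterSeq f n} →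
          closure {e : Y → Y | ∃ n : ℕ, e = iterSeq g n},
      Continuous H ∧ Function.Surjective H ∧
      (∀ (p : Ultrafilter ℕ)
          (hp : pIter f p ∈ closure {e : X → X | ∃ n : ℕ, e = iterSeq f n}),
        (H ⟨pIter f p, hp⟩ : Y → Y) = pIter g p) ∧
      (IsHomeomorph h → IsHomeomorph H) := by
  -- the section of h
  set s : Y → X := Function.surjInv hsurj with hs
  have hhs : ∀ y, h (s y) = y := fun y => Function.surjInv_eq hsurj y
  -- iterates commute
  have hiter : ∀ n, ∀ x, iterSeq g n (h x) = h (iterSeq f n x) := by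
    intro n
    induction n with
    | zero => intro x; rfl
    | succ n ih =>
      intro x
      have := congrFun (hconj (n + 1) (by omega)) (iterSeq f n x)
      simp only [iterSeq, Function.comp_apply] at this ⊢
      rw [ih x, this]
  -- part 1
  have part1 : ∀ p : Ultrafilter ℕ, pIter g p ∘ h = h ∘ pIter f p := by
    intro p
    funext x
    simp only [Function.comp_apply, pIter]
    have : (fun n => iterSeq g n (h x)) = fun n => h (iterSeq f n x) := by
      funext n; exact hiter n x
    rw [this, pLim_comm p _ hcont]
  refine ⟨part1, ?_⟩
  set SX : Set (X → X) := {e : X → X | ∃ n : ℕ, e = iterSeq f n} with hSX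
  set SY : Set (Y → Y) := {e : Y → Y | ∃ n : ℕ, e = iterSeq g n} with hSY
  -- the map on function spaces
  set Φ : (X → X) → (Y → Y) := fun e => h ∘ e ∘ s with hΦ
  have hΦcont : Continuous Φ := by
    refine continuous_pi fun y => ?_
    exact hcont.comp (continuous_apply (s y))
  have hΦiter : ∀ n, Φ (iterSeq f n) = iterSeq g n := by
    intro n
    funext y
    simp only [hΦ, Function.comp_apply]
    rw [← hiter n (s y), hhs y]
  have hΦmaps : ∀ e ∈ closure SX, Φ e ∈ closure SY := by
    intro e he
    have h1 : Φ '' closure SX ⊆ closure (Φ '' SX) := image_closure_subset_closure_image hΦcont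
    have h2 : Φ '' SX ⊆ SY := by
      rintro _ ⟨e', ⟨n, rfl⟩, rfl⟩
      exact ⟨n, hΦiter n⟩
    exact closure_mono h2 (h1 ⟨e, he, rfl⟩)
  refine ⟨fun e => ⟨Φ e.1, hΦmaps e.1 e.2⟩, ?_, ?_, ?_, ?_⟩
  · exact Continuous.subtype_mk (hΦcont.comp continuous_subtype_val) _
  · -- surjectivity
    rintro ⟨e', he'⟩
    have hcomp : IsCompact (Φ '' closure SX) :=
      ((isClosed_closure.isCompact)).image hΦcont
    have hclosed : IsClosed (Φ '' closure SX) := hcomp.isClosed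
    have hsub : SY ⊆ Φ '' closure SX := by
      rintro _ ⟨n, rfl⟩
      exact ⟨iterSeq f n, subset_closure ⟨n, rfl⟩, hΦiter n⟩
    have : e' ∈ Φ '' closure SX := closure_minimal hsub hclosed he'
    obtain ⟨e, he, heq⟩ := this
    exact ⟨⟨e, he⟩, Subtype.ext heq⟩
  · -- H (pIter f p) = pIter g p
    intro p hp
    funext y
    show Φ (pIter f p) y = pIter g p y
    have := congrFun (part1 p) (s y)
    simp only [Function.comp_apply, hhs y] at this
    simpa [hΦ] using this.symm
  · -- homeomorphism case
    intro hh
    have hinj : Function.Injective h := hh.bijective.injective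
    have hsh : ∀ x, s (h x) = x := fun x => hinj (hhs (h x))
    haveI : CompactSpace (closure SX) := isCompact_iff_compactSpace.mp isClosed_closure.isCompact
    rw [isHomeomorph_iff_continuous_bijective]
    refine ⟨Continuous.subtype_mk (hΦcont.comp continuous_subtype_val) _, ?_, ?_⟩
    · -- injective
      rintro ⟨e₁, h₁⟩ ⟨e₂, h₂⟩ hEq
      have hΦeq : Φ e₁ = Φ e₂ := congrArg Subtype.val hEq
      have : e₁ = e₂ := by
        funext x
        have := congrFun hΦeq (h x)
        simp only [hΦ, Function.comp_apply, hsh x] at this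
        exact hinj this
      exact Subtype.ext this
    · -- surjective (same as before)
      rintro ⟨e', he'⟩
      have hcomp : IsCompact (Φ '' closure SX) :=
        ((isClosed_closure.isCompact)).image hΦcont
      have hsub : SY ⊆ Φ '' closure SX := by
        rintro _ ⟨n, rfl⟩
        exact ⟨iterSeq f n, subset_closure ⟨n, rfl⟩, hΦiter n⟩
      have : e' ∈ Φ '' closure SX := closure_minimal hsub hcomp.isClosed he'
      obtain ⟨e, he, heq⟩ := this
      exact ⟨⟨e, he⟩, Subtype.ext heq⟩
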